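/- arXiv:1710.05428 — 3 statements merged into one kernel-verified Lean document; each statement's English description precedes it below -/
import Mathlib

section
/- Let p be a prime, a and g integers coprime to p, and U, V positive integers with U, V ≤ p−1. Let M_{a,g,p}(U,V) be the number of pairs (x,y) with 1 ≤ x ≤ U, 1 ≤ y ≤ V, y ≡ a·g^x (mod p), and let N_{a,g,p}(U,V) be the number of such pairs with additionally gcd(x,y)=1. Then N_{a,g,p}(U,V) = ∑_{d ≥ 1, gcd(d,p)=1} μ(d) · M_{a·d̄, g^d, p}(⌊U/d⌋, ⌊V/d⌋), where d̄ denotes the multiplicative inverse of d modulo p and the sum has finitely many nonzero terms (only d ≤ min(U,V) contribute). -/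
open scoped Classical
open ArithmeticFunction
open scoped ArithmeticFunction.Moebius

/-!
Möbius inversion over the common divisor `d` of `x` and `y`: `∑_{d ∣ gcd(x, y)} μ(d)` detects
`gcd(x, y) = 1`, and the pairs of the box with `d ∣ x`, `d ∣ y` are the `(d x', d y')` with
`(x', y')` in the box of sides `⌊U/d⌋`, `⌊V/d⌋` and `d y' ≡ a g^{d x'}`, i.e.
`y' ≡ a d̄ (g^d)^{x'}` when `d` is invertible mod `p`. When `gcd(d, p) > 1` there are no such
pairs at all: `a g^x` is a unit mod `p`, so it is not congruent to a multiple of `d`.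
-/

open Finset

theorem card_filter_gcd_eq_one_eq_sum_moebius (T : Finset (ℕ × ℕ)) (n : ℕ)
    (hT : ∀ xy ∈ T, xy.1.gcd xy.2 ∈ Icc 1 n) :
    ((T.filter fun xy => xy.1.gcd xy.2 = 1).card : ℤ) =
      ∑ d ∈ Icc 1 n, μ d * ((T.filter fun xy => d ∣ xy.1 ∧ d ∣ xy.2).card : ℤ) := by
  have divisors_eq :
      ∀ xy ∈ T, (Icc 1 n).filter (· ∣ xy.1.gcd xy.2) = (xy.1.gcd xy.2).divisors := by
    intro xy hxy
    obtain ⟨hg1, hgn⟩ := mem_Icc.mp (hT xy hxy)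
    ext d
    simp only [mem_filter, mem_Icc, Nat.mem_divisors]
    constructor
    · rintro ⟨-, hd⟩
      exact ⟨hd, by omega⟩
    · rintro ⟨hd, -⟩
      exact ⟨⟨Nat.pos_of_dvd_of_pos hd hg1, (Nat.le_of_dvd hg1 hd).trans hgn⟩, hd⟩
  calc ((T.filter fun xy => xy.1.gcd xy.2 = 1).card : ℤ)
      = ∑ xy ∈ T, ∑ d ∈ (xy.1.gcd xy.2).divisors, μ d := by
        rw [card_filter]
        push_cast
        refine sum_congr rfl fun xy _ => ?_
        rw [← coe_mul_zeta_apply, moebius_mul_coe_zeta, one_apply]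
    _ = ∑ xy ∈ T, ∑ d ∈ Icc 1 n, if d ∣ xy.1 ∧ d ∣ xy.2 then μ d else 0 := by
        refine sum_congr rfl fun xy hxy => ?_
        simp only [← Nat.dvd_gcd_iff, ← sum_filter, divisors_eq xy hxy]
    _ = ∑ d ∈ Icc 1 n, μ d * ((T.filter fun xy => d ∣ xy.1 ∧ d ∣ xy.2).card : ℤ) := by
        rw [sum_comm]
        refine sum_congr rfl fun d _ => ?_
        rw [card_filter, Nat.cast_sum, mul_sum]
        refine sum_congr rfl fun xy _ => ?_
        split_ifs <;> simp

theorem card_filter_dvd_dvd_Icc_prod (P : ℕ × ℕ → Prop) [DecidablePred P] {d : ℕ} (hd : 0 < d)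
    (U V : ℕ) :
    ((Icc 1 U ×ˢ Icc 1 V).filter fun xy => P xy ∧ d ∣ xy.1 ∧ d ∣ xy.2).card =
      ((Icc 1 (U / d) ×ˢ Icc 1 (V / d)).filter fun xy => P (d * xy.1, d * xy.2)).card := by
  have mem_Icc_div : ∀ {n W : ℕ}, n ∈ Icc 1 (W / d) ↔ d * n ∈ Icc 1 W := by
    intro n W
    simp only [mem_Icc, Nat.le_div_iff_mul_le hd, mul_comm n d, Nat.one_le_iff_ne_zero,
      mul_ne_zero_iff, ne_eq, hd.ne', not_false_eq_true, true_and]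
  symm
  refine card_nbij' (fun xy => (d * xy.1, d * xy.2)) (fun xy => (xy.1 / d, xy.2 / d)) ?_ ?_ ?_ ?_
  · rintro ⟨x, y⟩ hxy
    simp only [mem_coe, mem_filter, mem_product, mem_Icc_div] at hxy ⊢
    exact ⟨hxy.1, hxy.2, dvd_mul_right d x, dvd_mul_right d y⟩
  · rintro ⟨x, y⟩ hxy
    simp only [mem_coe, mem_filter, mem_product, mem_Icc_div] at hxy ⊢
    obtain ⟨hbox, hP, hx, hy⟩ := hxy
    rw [Nat.mul_div_cancel' hx, Nat.mul_div_cancel' hy]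
    exact ⟨hbox, hP⟩
  · rintro ⟨x, y⟩ -
    simp [Nat.mul_div_cancel_left _ hd]
  · rintro ⟨x, y⟩ hxy
    simp only [mem_coe, mem_filter] at hxy
    simp [Nat.mul_div_cancel' hxy.2.2.1, Nat.mul_div_cancel' hxy.2.2.2]

theorem natCast_mul_eq_mul_pow_mul_iff {p d : ℕ} (hd : d.Coprime p) (a g : ZMod p) (x y : ℕ) :
    ((d * y : ℕ) : ZMod p) = a * g ^ (d * x) ↔ (y : ZMod p) = a * (d : ZMod p)⁻¹ * (g ^ d) ^ x := by
  rw [Nat.cast_mul, pow_mul, ← ZMod.coe_unitOfCoprime d hd, ZMod.inv_coe_unit, mul_right_comm,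
    Units.eq_mul_inv_iff_mul_eq, mul_comm]

theorem gcd_mem_Icc_min_of_mem_Icc_prod {U V : ℕ} {xy : ℕ × ℕ}
    (h : xy ∈ Icc 1 U ×ˢ Icc 1 V) : xy.1.gcd xy.2 ∈ Icc 1 (min U V) := by
  simp only [mem_product, mem_Icc] at h
  have := Nat.gcd_le_left xy.2 (show 0 < xy.1 by omega)
  have := Nat.gcd_le_right (n := xy.2) xy.1 (show 0 < xy.2 by omega)
  exact mem_Icc.mpr ⟨Nat.gcd_pos_of_pos_left _ (by omega), le_min (by omega) (by omega)⟩

theorem ZMod.isUnit_intCast_of_gcd_eq_one {p : ℕ} {a : ℤ} (ha : Int.gcd a p = 1) :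
    IsUnit (a : ZMod p) := by
  have := (Int.isCoprime_iff_gcd_eq_one.mpr ha).map (Int.castRingHom (ZMod p))
  rwa [eq_intCast, eq_intCast, Int.cast_natCast, ZMod.natCast_self, isCoprime_zero_right] at this

theorem stmt_4_general (p : ℕ) (a g : ℤ)
    (ha : Int.gcd a p = 1) (hg : Int.gcd g p = 1)
    (U V : ℕ)
    (M : ℕ → ℕ)
    (hM : ∀ d : ℕ, M d = ((Finset.Icc 1 (U / d) ×ˢ Finset.Icc 1 (V / d)).filter
      (fun xy : ℕ × ℕ =>
        (xy.2 : ZMod p) = (a : ZMod p) * ((d : ZMod p))⁻¹ * ((g : ZMod p) ^ d) ^ xy.1)).card)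
    (N : ℕ)
    (hN : N = ((Finset.Icc 1 U ×ˢ Finset.Icc 1 V).filter (fun xy : ℕ × ℕ =>
      ((xy.2 : ZMod p) = (a : ZMod p) * (g : ZMod p) ^ xy.1) ∧
        Nat.gcd xy.1 xy.2 = 1)).card) :
    (N : ℤ) = ∑ d ∈ (Finset.Icc 1 (min U V)).filter (fun d => Nat.gcd d p = 1),
      μ d * (M d : ℤ) := by
  rw [hN, ← filter_filter, card_filter_gcd_eq_one_eq_sum_moebius _ _
      fun xy hxy => gcd_mem_Icc_min_of_mem_Icc_prod (mem_filter.mp hxy).1,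
    ← sum_filter_of_ne (p := fun d => Nat.gcd d p = 1)]
  · refine sum_congr rfl fun d hd => ?_
    have hd0 : 0 < d := (mem_Icc.mp (mem_filter.mp hd).1).1
    rw [filter_filter, card_filter_dvd_dvd_Icc_prod _ hd0, hM d]
    congr 3
    exact filter_congr fun xy _ => natCast_mul_eq_mul_pow_mul_iff (mem_filter.mp hd).2 _ _ _ _
  · intro d _ hne
    obtain ⟨xy, hxy⟩ := card_ne_zero.mp (Nat.cast_ne_zero.mp (right_ne_zero_of_mul hne))
    simp only [mem_filter] at hxy
    obtain ⟨⟨-, hcong⟩, -, hdy⟩ := hxy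
    have hy : IsUnit (xy.2 : ZMod p) := hcong ▸
      (ZMod.isUnit_intCast_of_gcd_eq_one ha).mul ((ZMod.isUnit_intCast_of_gcd_eq_one hg).pow _)
    exact ((ZMod.isUnit_iff_coprime _ p).mp hy).coprime_dvd_left hdy

/-- Möbius inversion identity for the number of visible points on an exponential curve:
N_{a,g,p}(U,V) = ∑_{d ≤ min(U,V), gcd(d,p)=1} μ(d)·M_{a·d̄, g^d, p}(⌊U/d⌋,⌊V/d⌋). -/
theorem stmt_4 (p : ℕ) (hp : p.Prime) (a g : ℤ)
    (ha : Int.gcd a p = 1) (hg : Int.gcd g p = 1)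
    (U V : ℕ) (hU1 : 1 ≤ U) (hV1 : 1 ≤ V) (hU : U ≤ p - 1) (hV : V ≤ p - 1)
    (M : ℕ → ℕ)
    (hM : ∀ d : ℕ, M d = ((Finset.Icc 1 (U / d) ×ˢ Finset.Icc 1 (V / d)).filter
      (fun xy : ℕ × ℕ =>
        (xy.2 : ZMod p) = (a : ZMod p) * ((d : ZMod p))⁻¹ * ((g : ZMod p) ^ d) ^ xy.1)).card)
    (N : ℕ)
    (hN : N = ((Finset.Icc 1 U ×ˢ Finset.Icc 1 V).filter (fun xy : ℕ × ℕ =>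
      ((xy.2 : ZMod p) = (a : ZMod p) * (g : ZMod p) ^ xy.1) ∧
        Nat.gcd xy.1 xy.2 = 1)).card) :
    (N : ℤ) = ∑ d ∈ (Finset.Icc 1 (min U V)).filter (fun d => Nat.gcd d p = 1),
      μ d * (M d : ℤ) :=
  stmt_4_general p a g ha hg U V M hM N hN
end

section
/- Let p be a prime, a and g integers coprime to p, and D ≤ p a positive integer. Let R_{a,g,p}(K;D) be the number of integers d with K+1 ≤ d ≤ K+D satisfying a·d ≡ g^d (mod p). Then R_{a,g,p}(K;D) = O(D^{1/2}), i.e., there is an absolute constant C such that R_{a,g,p}(K;D) ≤ C·D^{1/2} for all such p, a, g, K, D. -/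
/-!
If `d` and `d + k` both solve `a d = g ^ d` in `𝔽_p`, then `d * g ^ k = d + k`, i.e.
`d * (g ^ k - 1) = k`. When `k ≢ 0` this forces `g ^ k ≠ 1` and determines `d` modulo `p`
from `k`; as the solutions lie in an interval of length at most `p`, it determines `d` itself.
So distinct ordered pairs of solutions have distinct differences, and the `n (n - 1)` differences
of `n` solutions in `(K, K + D]` lie in `(-D, D)`, whence `n (n - 1) < 2 D` and `n ≤ 2 √D`.
-/

open Finset

theorem ZMod.intCast_ne_zero_of_gcd_eq_one {p : ℕ} (hp : p ≠ 1) {n : ℤ}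
    (h : Int.gcd n p = 1) : (n : ZMod p) ≠ 0 := by
  rw [Ne, ZMod.intCast_zmod_eq_zero_iff_dvd]
  intro hdvd
  have hp_dvd_one : (p : ℤ) ∣ 1 := by simpa [h] using Int.dvd_coe_gcd hdvd (dvd_refl (p : ℤ))
  exact hp (Nat.dvd_one.1 (Int.natCast_dvd_natCast.1 hp_dvd_one))

theorem ZMod.eq_of_intCast_eq_of_abs_sub_lt {p : ℕ} {x y : ℤ} (h : (x : ZMod p) = y)
    (hxy : |x - y| < p) : x = y := by
  rw [ZMod.intCast_eq_intCast_iff_dvd_sub] at h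
  have := Int.eq_zero_of_abs_lt_dvd h (by rwa [abs_sub_comm])
  omega

section Field

variable {F : Type*} [Field F] {a g : F}

theorem mul_zpow_sub_eq_of_mul_eq_zpow (ha : a ≠ 0) (hg : g ≠ 0) {d d' : ℤ}
    (hd : a * d = g ^ d) (hd' : a * d' = g ^ d') : (d : F) * g ^ (d' - d) = d' := by
  apply mul_left_cancel₀ ha
  rw [← mul_assoc, hd, ← zpow_add₀ hg, add_sub_cancel, hd']

theorem intCast_eq_of_mul_eq_zpow_of_sub_eq (ha : a ≠ 0) (hg : g ≠ 0) {d d' e e' : ℤ}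
    (hd : a * d = g ^ d) (hd' : a * d' = g ^ d') (he : a * e = g ^ e) (he' : a * e' = g ^ e')
    (hsub : d' - d = e' - e) (hk : ((d' - d : ℤ) : F) ≠ 0) : (d : F) = e := by
  set k := d' - d
  have hdk : (d : F) * g ^ k = d + k := by
    rw [mul_zpow_sub_eq_of_mul_eq_zpow ha hg hd hd']; push_cast [k]; ring
  have hek : (e : F) * g ^ k = e + k := by
    rw [hsub, mul_zpow_sub_eq_of_mul_eq_zpow ha hg he he']; push_cast; ring
  have hgk : g ^ k - 1 ≠ 0 := by
    intro h
    apply hk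
    linear_combination (d : F) * h - hdk
  have : ((d : F) - e) * (g ^ k - 1) = 0 := by linear_combination hdk - hek
  exact sub_eq_zero.1 ((mul_eq_zero.1 this).resolve_right hgk)

end Field

theorem injOn_sub_offDiag_of_mul_eq_zpow {p : ℕ} [Fact p.Prime] {a g : ZMod p} (ha : a ≠ 0)
    (hg : g ≠ 0) {S : Finset ℤ} (hS : ∀ d ∈ S, a * d = g ^ d)
    (hspread : ∀ x ∈ S, ∀ y ∈ S, |x - y| < p) :
    Set.InjOn (fun x : ℤ × ℤ => x.2 - x.1) S.offDiag := by
  rintro ⟨d, d'⟩ hdd ⟨e, e'⟩ hee (hsub : d' - d = e' - e)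
  simp only [coe_offDiag, Set.mem_offDiag] at hdd hee
  obtain ⟨hd, hd', hne⟩ := hdd
  obtain ⟨he, he', -⟩ := hee
  have hk : ((d' - d : ℤ) : ZMod p) ≠ 0 := by
    rw [Int.cast_sub, sub_ne_zero]
    exact fun h => hne (ZMod.eq_of_intCast_eq_of_abs_sub_lt h (hspread d' hd' d hd)).symm
  have hde : d = e := ZMod.eq_of_intCast_eq_of_abs_sub_lt
    (intCast_eq_of_mul_eq_zpow_of_sub_eq ha hg (hS d hd) (hS d' hd') (hS e he) (hS e' he') hsub hk)
    (hspread d hd e he)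
  simp only [Prod.mk.injEq]
  omega

theorem card_mul_card_sub_one_le_of_injOn_sub {S : Finset ℤ} {K : ℤ} {D : ℕ}
    (hS : S ⊆ Icc (K + 1) (K + D))
    (hinj : Set.InjOn (fun x : ℤ × ℤ => x.2 - x.1) S.offDiag) :
    #S * (#S - 1) ≤ 2 * D := by
  have hmaps : ∀ x ∈ S.offDiag, x.2 - x.1 ∈ Icc (1 - (D : ℤ)) (D - 1) := by
    intro x hx
    obtain ⟨h1, h2, -⟩ := mem_offDiag.1 hx
    have := mem_Icc.1 (hS h1)
    have := mem_Icc.1 (hS h2)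
    rw [mem_Icc]
    omega
  have := card_le_card_of_injOn _ hmaps hinj
  rw [offDiag_card, Int.card_Icc] at this
  rw [Nat.mul_sub_one]
  omega

theorem Nat.cast_le_two_mul_sqrt_of_mul_sub_one_le {n D : ℕ} (hD : 0 < D)
    (h : n * (n - 1) ≤ 2 * D) : (n : ℝ) ≤ 2 * √D := by
  have hsq : n ^ 2 ≤ 4 * D := by
    rcases n with _ | _ | n
    · simp
    · omega
    · simp only [add_tsub_cancel_right] at h
      nlinarith
  have hsqR : (n : ℝ) ^ 2 ≤ 4 * D := by exact_mod_cast hsq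
  nlinarith [Real.sq_sqrt (Nat.cast_nonneg D : (0 : ℝ) ≤ D), Real.sqrt_nonneg D]

/-- The number of solutions d ∈ (K, K+D] of a·d ≡ g^d (mod p) is O(D^{1/2}),
uniformly in p, a, g, K, D. -/
theorem stmt_5 : ∃ C : ℝ, 0 < C ∧
    ∀ (p : ℕ) [Fact p.Prime] (a g : ℤ), Int.gcd (a * g) p = 1 →
      ∀ (K : ℤ) (D : ℕ), 0 < D → D ≤ p →
        (((Finset.Icc (K + 1) (K + (D : ℤ))).filter (fun d : ℤ =>
            ((a * d : ℤ) : ZMod p) = (g : ZMod p) ^ d)).card : ℝ) ≤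
          C * Real.sqrt D := by
  refine ⟨2, two_pos, fun p hp a g hcop K D hD hDp => ?_⟩
  set S := (Icc (K + 1) (K + (D : ℤ))).filter (fun d : ℤ =>
    ((a * d : ℤ) : ZMod p) = (g : ZMod p) ^ d)
  have hag : ((a * g : ℤ) : ZMod p) ≠ 0 := ZMod.intCast_ne_zero_of_gcd_eq_one hp.out.ne_one hcop
  rw [Int.cast_mul] at hag
  have hSI : S ⊆ Icc (K + 1) (K + D) := filter_subset _ _
  have hsol : ∀ d ∈ S, (a : ZMod p) * d = (g : ZMod p) ^ d := fun d hd => by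
    simpa using (mem_filter.1 hd).2
  have hspread : ∀ x ∈ S, ∀ y ∈ S, |x - y| < p := fun x hx y hy => by
    have := mem_Icc.1 (hSI hx)
    have := mem_Icc.1 (hSI hy)
    rw [abs_lt]
    omega
  exact Nat.cast_le_two_mul_sqrt_of_mul_sub_one_le hD <|
    card_mul_card_sub_one_le_of_injOn_sub hSI <| injOn_sub_offDiag_of_mul_eq_zpow
      (left_ne_zero_of_mul hag) (right_ne_zero_of_mul hag) hsol hspread
end

section
/- Let p be a prime, a and g integers coprime to p, n ≥ 2 an integer, and I₁, I₂ intervals of h₁ and h₂ consecutive integers respectively. Let M = M_{a,g,p}(I₁,I₂) be the number of pairs (x,y) ∈ I₁ × I₂ with y ≡ a·g^x (mod p). Suppose that the number K of 2n-tuples (y₁,…,yₙ,z₁,…,zₙ) ∈ I₂^{2n} with y₁⋯yₙ ≡ z₁⋯zₙ ≢ 0 (mod p) satisfies K ≤ B. Suppose also that 0 ∉ I₂ modulo p (every element of I₂ is coprime to p). Then M^{2n} ≤ n·h₁·B. -/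
/-!
Write `S` for the set of points `(x, y)` of the curve `y = a gˣ` in `I₁ × I₂`, so `M = #S`.
For an `n`-tuple of points of `S`, the product of the `y`-coordinates is `aⁿ g^σ`, where `σ`,
the sum of the `x`-coordinates, takes at most `n h₁` values. By Cauchy–Schwarz,
`M^{2n} = #(Sⁿ)² ≤ n h₁ · #{(s, t) ∈ Sⁿ × Sⁿ : σ s = σ t}`, and since `h₁ ≤ ord g` a point of `S`
is determined by its `y`-coordinate, so such pairs inject into the coincident products counted
by `K`. The products are units, hence nonzero.
-/

open Finset

lemma card_sq_le_card_mul_card_filter_eq {α β : Type*} [DecidableEq β] {s : Finset α}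
    {t : Finset β} {f : α → β} (hf : Set.MapsTo f s t) :
    #s ^ 2 ≤ #t * #{xy ∈ s ×ˢ s | f xy.1 = f xy.2} := by
  have hpairs : #{xy ∈ s ×ˢ s | f xy.1 = f xy.2} = ∑ c ∈ t, #{a ∈ s | f a = c} ^ 2 := by
    rw [card_eq_sum_card_fiberwise (f := fun xy : α × α => f xy.1) (t := t)]
    · refine sum_congr rfl fun c _ => ?_
      rw [sq, ← card_product, filter_filter]
      congr 1
      ext ⟨x, y⟩
      simp only [mem_filter, mem_product]
      constructor
      · rintro ⟨⟨hx, hy⟩, hxy, rfl⟩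
        exact ⟨⟨hx, rfl⟩, hy, hxy.symm⟩
      · rintro ⟨⟨hx, rfl⟩, hy, hyx⟩
        exact ⟨⟨hx, hy⟩, hyx.symm, rfl⟩
    · intro xy hxy
      exact hf (mem_product.mp (mem_filter.mp hxy).1).1
  rw [hpairs, card_eq_sum_card_fiberwise hf]
  exact sq_sum_le_card_mul_sum_sq

lemma zpow_injOn_Icc {G : Type*} [Group G] {g : G} {K : ℤ} {h : ℕ} (hh : h ≤ orderOf g) :
    Set.InjOn (g ^ · : ℤ → G) (Set.Icc (K + 1) (K + h)) := by
  intro x hx y hy hxy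
  have hdvd : (orderOf g : ℤ) ∣ x - y := (zpow_eq_zpow_iff_modEq.mp hxy).symm.dvd
  have hlt : (x - y).natAbs < (orderOf g : ℤ).natAbs := by
    simp only [Set.mem_Icc] at hx hy
    omega
  have := Int.eq_zero_of_dvd_of_natAbs_lt_natAbs hdvd hlt
  omega

lemma zpow_sum {G : Type*} [CommGroup G] (g : G) {ι : Type*} (s : Finset ι) (f : ι → ℤ) :
    g ^ (∑ i ∈ s, f i) = ∏ i ∈ s, g ^ f i := by
  induction s using Finset.cons_induction with
  | empty => simp
  | cons i s hi ih => rw [sum_cons, prod_cons, zpow_add, ih]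

lemma sum_mem_Icc_of_mem_Icc {ι : Type*} {s : Finset ι} {f : ι → ℤ} {a b : ℤ}
    (hf : ∀ i ∈ s, f i ∈ Icc a b) : ∑ i ∈ s, f i ∈ Icc (#s * a) (#s * b) := by
  simp only [mem_Icc] at hf ⊢
  constructor
  · simpa using card_nsmul_le_sum s f a fun i hi => (hf i hi).1
  · simpa using sum_le_card_nsmul s f b fun i hi => (hf i hi).2

lemma card_Icc_mul_le {n : ℕ} (hn : n ≠ 0) (K : ℤ) (h : ℕ) :
    #(Icc (n * (K + 1)) (n * (K + h))) ≤ n * h := by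
  have hlen : (n : ℤ) * (K + h) + 1 - n * (K + 1) = n * h - n + 1 := by ring
  rw [Int.card_Icc, hlen]
  omega

section ExponentialCurve

variable {R : Type*} [CommRing R] [DecidableEq R]

def expCurvePoints (a g : Rˣ) (I J : Finset ℤ) : Finset (ℤ × ℤ) :=
  (I ×ˢ J).filter fun xy => (xy.2 : R) = ((a * g ^ xy.1 : Rˣ) : R)

variable (R) in
def coincidentProducts (n : ℕ) (J : Finset ℤ) : Finset ((Fin n → ℤ) × (Fin n → ℤ)) :=
  (Fintype.piFinset (fun _ => J) ×ˢ Fintype.piFinset (fun _ => J)).filter fun yz =>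
    (∏ i, (yz.1 i : R)) = ∏ i, (yz.2 i : R) ∧ ∏ i, (yz.1 i : R) ≠ 0

lemma snd_injOn_expCurvePoints {a g : Rˣ} {K : ℤ} {h : ℕ} (hh : h ≤ orderOf g)
    (J : Finset ℤ) :
    Set.InjOn Prod.snd (expCurvePoints a g (Icc (K + 1) (K + h)) J : Set (ℤ × ℤ)) := by
  rintro ⟨x, y⟩ hxy ⟨x', y'⟩ hxy' (rfl : y = y')
  simp only [expCurvePoints, mem_coe, mem_filter, mem_product, mem_Icc] at hxy hxy'
  have hpow : g ^ x = g ^ x' := mul_left_cancel (Units.ext (hxy.2.symm.trans hxy'.2))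
  rw [zpow_injOn_Icc hh hxy.1.1 hxy'.1.1 hpow]

lemma prod_snd_of_mem_expCurvePoints {a g : Rˣ} {I J : Finset ℤ} {n : ℕ}
    {s : Fin n → ℤ × ℤ} (hs : ∀ i, s i ∈ expCurvePoints a g I J) :
    ∏ i, ((s i).2 : R) = ((a ^ n * g ^ ∑ i, (s i).1 : Rˣ) : R) := by
  have hpt : ∀ i, ((s i).2 : R) = ((a * g ^ (s i).1 : Rˣ) : R) := fun i =>
    (mem_filter.mp (hs i)).2
  simp only [hpt, ← Units.coe_prod, prod_mul_distrib, prod_const, card_univ, Fintype.card_fin,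
    zpow_sum]

variable [Nontrivial R]

theorem card_expCurvePoints_pow_le (a g : Rˣ) {n : ℕ} (hn : n ≠ 0) (K : ℤ) {h : ℕ}
    (hh : h ≤ orderOf g) (J : Finset ℤ) :
    #(expCurvePoints a g (Icc (K + 1) (K + h)) J) ^ (2 * n) ≤
      n * h * #(coincidentProducts R n J) := by
  set S := expCurvePoints a g (Icc (K + 1) (K + h)) J
  set P := Fintype.piFinset fun _ : Fin n => S
  set σ : (Fin n → ℤ × ℤ) → ℤ := fun s => ∑ i, (s i).1
  have hσ : Set.MapsTo σ P (Icc (n * (K + 1)) (n * (K + h))) := fun s hs => by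
    simpa using sum_mem_Icc_of_mem_Icc (s := univ) fun i _ =>
      (mem_product.mp (mem_filter.mp (Fintype.mem_piFinset.mp hs i)).1).1
  have hpairs : #{st ∈ P ×ˢ P | σ st.1 = σ st.2} ≤ #(coincidentProducts R n J) := by
    refine card_le_card_of_injOn (fun st => (fun i => (st.1 i).2, fun i => (st.2 i).2)) ?_ ?_
    · rintro ⟨s, t⟩ hst
      simp only [P, coe_filter, mem_product, Fintype.mem_piFinset, Set.mem_ofPred_eq] at hst
      obtain ⟨⟨hs, ht⟩, hσst⟩ := hst
      simp only [coincidentProducts, coe_filter, mem_product, Fintype.mem_piFinset,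
        Set.mem_ofPred_eq, prod_snd_of_mem_expCurvePoints hs, prod_snd_of_mem_expCurvePoints ht]
      refine ⟨⟨fun i => (mem_product.mp (mem_filter.mp (hs i)).1).2,
        fun i => (mem_product.mp (mem_filter.mp (ht i)).1).2⟩,
        congrArg (fun m => ((a ^ n * g ^ m : Rˣ) : R)) hσst, Units.ne_zero _⟩
    · rintro ⟨s, t⟩ hst ⟨s', t'⟩ hst' hst_eq
      simp only [P, coe_filter, mem_product, Fintype.mem_piFinset, Set.mem_ofPred_eq] at hst hst'
      simp only [Prod.mk.injEq, funext_iff] at hst_eq ⊢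
      have hsnd := snd_injOn_expCurvePoints (a := a) (K := K) hh J
      exact ⟨fun i => hsnd (hst.1.1 i) (hst'.1.1 i) (hst_eq.1 i),
        fun i => hsnd (hst.1.2 i) (hst'.1.2 i) (hst_eq.2 i)⟩
  calc #S ^ (2 * n) = #P ^ 2 := by
        rw [Fintype.card_piFinset, prod_const, card_univ, Fintype.card_fin, ← pow_mul, mul_comm]
    _ ≤ #(Icc (n * (K + 1)) (n * (K + h))) * #{st ∈ P ×ˢ P | σ st.1 = σ st.2} :=
        card_sq_le_card_mul_card_filter_eq hσ
    _ ≤ n * h * #(coincidentProducts R n J) :=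
        Nat.mul_le_mul (card_Icc_mul_le hn K h) hpairs

end ExponentialCurve

theorem stmt_11_general (p : ℕ) [Fact p.Prime] (a g : (ZMod p)ˣ) (n : ℕ) (hn : 2 ≤ n)
    (K₁ K₂ : ℤ) (h₁ h₂ : ℕ)
    (hh₁ : h₁ ≤ orderOf g)
    (M : ℕ)
    (hMdef : M = ((Finset.Icc (K₁ + 1) (K₁ + (h₁ : ℤ)) ×ˢ
        Finset.Icc (K₂ + 1) (K₂ + (h₂ : ℤ))).filter (fun xy : ℤ × ℤ =>
      ((xy.2 : ZMod p) = ((a * g ^ xy.1 : (ZMod p)ˣ) : ZMod p)))).card)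
    (B : ℕ)
    (hK : ((Fintype.piFinset (fun _ : Fin n => Finset.Icc (K₂ + 1) (K₂ + (h₂ : ℤ))) ×ˢ
        Fintype.piFinset (fun _ : Fin n => Finset.Icc (K₂ + 1) (K₂ + (h₂ : ℤ)))).filter
      (fun fg : (Fin n → ℤ) × (Fin n → ℤ) =>
        (∏ i, ((fg.1 i : ZMod p)) = ∏ i, ((fg.2 i : ZMod p))) ∧
          ∏ i, ((fg.1 i : ZMod p)) ≠ 0)).card ≤ B) :
    M ^ (2 * n) ≤ n * h₁ * B := by
  subst hMdef
  calc _ ≤ n * h₁ * #(coincidentProducts (ZMod p) n (Icc (K₂ + 1) (K₂ + h₂))) :=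
        card_expCurvePoints_pow_le a g (by omega) K₁ hh₁ _
    _ ≤ n * h₁ * B := Nat.mul_le_mul_left _ hK

/-- Core inequality of Lemma 2.6: M^{2n} ≤ n·h₁·B, where M counts points of the
exponential curve in I₁ × I₂ and B bounds the number of coincident n-fold products
from I₂. -/
theorem stmt_11 (p : ℕ) [Fact p.Prime] (a g : (ZMod p)ˣ) (n : ℕ) (hn : 2 ≤ n)
    (K₁ K₂ : ℤ) (h₁ h₂ : ℕ)
    (hh₁ : h₁ ≤ orderOf g) (hh₂ : h₂ ≤ orderOf g)
    (h0 : ∀ y ∈ Finset.Icc (K₂ + 1) (K₂ + (h₂ : ℤ)), (y : ZMod p) ≠ 0)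
    (M : ℕ)
    (hMdef : M = ((Finset.Icc (K₁ + 1) (K₁ + (h₁ : ℤ)) ×ˢ
        Finset.Icc (K₂ + 1) (K₂ + (h₂ : ℤ))).filter (fun xy : ℤ × ℤ =>
      ((xy.2 : ZMod p) = ((a * g ^ xy.1 : (ZMod p)ˣ) : ZMod p)))).card)
    (B : ℕ)
    (hK : ((Fintype.piFinset (fun _ : Fin n => Finset.Icc (K₂ + 1) (K₂ + (h₂ : ℤ))) ×ˢ
        Fintype.piFinset (fun _ : Fin n => Finset.Icc (K₂ + 1) (K₂ + (h₂ : ℤ)))).filter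
      (fun fg : (Fin n → ℤ) × (Fin n → ℤ) =>
        (∏ i, ((fg.1 i : ZMod p)) = ∏ i, ((fg.2 i : ZMod p))) ∧
          ∏ i, ((fg.1 i : ZMod p)) ≠ 0)).card ≤ B) :
    M ^ (2 * n) ≤ n * h₁ * B :=
  stmt_11_general p a g n hn K₁ K₂ h₁ h₂ hh₁ M hMdef B hK
end
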